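/- arXiv:0802.1565 — 2 statements merged into one kernel-verified Lean document; each statement's English description precedes it below -/
import Mathlib

section
/- Let k be even, and let r ≥ 2 and p, q ≥ 1 be integers with r + q + p = k. Then T(r,q,p) - (-1)^p·ζ(r, k-r) lies in the Q-span of the double zeta values ζ(j, k-j) for 2 ≤ j ≤ r-1 together with ζ(k) and the products ζ(j)·ζ(k-j) for 2 ≤ j ≤ k-2. -/
/-- Riemann zeta value ζ(j) = ∑_{m≥1} 1/m^j. -/
noncomputable def rz (j : ℕ) : ℝ := ∑' n : ℕ, 1 / ((n : ℝ) + 1) ^ j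

/-- Double zeta value ζ(q,p) = ∑_{n>m>0} 1/(n^q m^p). -/
noncomputable def dz (q p : ℕ) : ℝ :=
  ∑' x : ℕ × ℕ, 1 / (((x.1 : ℝ) + (x.2 : ℝ) + 2) ^ q * ((x.2 : ℝ) + 1) ^ p)

/-- Tornheim double series T(r,q,p) = ∑_{n,m>0} 1/((n+m)^r n^q m^p). -/
noncomputable def T (r q p : ℕ) : ℝ :=
  ∑' x : ℕ × ℕ,
    1 / (((x.1 : ℝ) + (x.2 : ℝ) + 2) ^ r * ((x.1 : ℝ) + 1) ^ q * ((x.2 : ℝ) + 1) ^ p)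

/-!
Writing `n = (n + m) - m` gives the partial-fraction recursion
`T(a+1, b, c+1) = T(a, b+1, c+1) - T(a+1, b+1, c)` at fixed weight `k`. At `a = 0` the sum
factors as `ζ(b) ζ(c)`, and at `c = 0` it is the double zeta value `ζ(a, k-a)`. Iterating in `c`,
`T(a+1, b, c) ≡ (-1)^c ζ(a+1, k-a-1)` modulo values `T(a, ·, ·)`, so by induction on `a`
everything is reduced to the values `T(1, b, c)`. For these the recursion gives
`T(1, b, c) ≡ (-1)^(b-1) T(1, 1, k-2)` modulo products; at `b = k - 2` the symmetry
`T(1, k-2, 1) = T(1, 1, k-2)` and the parity of `k` give `2 T(1, 1, k-2) ≡ 0`.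
-/

noncomputable def tornheimTerm (a b c : ℕ) (x : ℕ × ℕ) : ℝ :=
  1 / (((x.1 : ℝ) + (x.2 : ℝ) + 2) ^ a * ((x.1 : ℝ) + 1) ^ b * ((x.2 : ℝ) + 1) ^ c)

lemma T_eq_tsum (a b c : ℕ) : T a b c = ∑' x, tornheimTerm a b c x := rfl

lemma dz_eq_T (a b : ℕ) : dz a b = T a 0 b := by
  simp only [dz, T, pow_zero, mul_one]

lemma tornheimTerm_nonneg (a b c : ℕ) (x : ℕ × ℕ) : 0 ≤ tornheimTerm a b c x := by
  unfold tornheimTerm; positivity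

lemma summable_one_div_add_one_pow {j : ℕ} (hj : 2 ≤ j) :
    Summable fun n : ℕ => 1 / ((n : ℝ) + 1) ^ j := by
  exact_mod_cast (summable_nat_add_iff 1).mpr (Real.summable_one_div_nat_pow.mpr hj)

lemma pow_le_pow_sub_mul_pow {x y : ℝ} (hx : 1 ≤ x) (hxy : x ≤ y) (i j : ℕ) :
    x ^ i ≤ y ^ (i - j) * x ^ j := by
  rcases le_total j i with h | h
  · rw [← pow_sub_mul_pow x h]
    gcongr
  · rw [Nat.sub_eq_zero_of_le h, pow_zero, one_mul]
    exact pow_le_pow_right₀ hx h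

lemma tornheimTerm_le {a b c : ℕ} (hab : 2 ≤ a + b) (hac : 2 ≤ a + c) (habc : 4 ≤ a + b + c)
    (x : ℕ × ℕ) :
    tornheimTerm a b c x ≤ 1 / ((x.1 : ℝ) + 1) ^ 2 * (1 / ((x.2 : ℝ) + 1) ^ 2) := by
  set n : ℝ := (x.1 : ℝ) + 1
  set m : ℝ := (x.2 : ℝ) + 1
  have hn : 1 ≤ n := by simp [n]
  have hm : 1 ≤ m := by simp [m]
  have hs : (x.1 : ℝ) + x.2 + 2 = n + m := by ring
  have hbound : n ^ 2 * m ^ 2 ≤ (n + m) ^ a * n ^ b * m ^ c :=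
    calc n ^ 2 * m ^ 2
        ≤ ((n + m) ^ (2 - b) * n ^ b) * ((n + m) ^ (2 - c) * m ^ c) := by
          gcongr
          · exact pow_le_pow_sub_mul_pow hn (by linarith) 2 b
          · exact pow_le_pow_sub_mul_pow hm (by linarith) 2 c
      _ = (n + m) ^ ((2 - b) + (2 - c)) * n ^ b * m ^ c := by ring
      _ ≤ (n + m) ^ a * n ^ b * m ^ c := by
          gcongr
          · linarith
          · omega
  rw [tornheimTerm, hs, one_div_mul_one_div]
  exact one_div_le_one_div_of_le (by positivity) hbound

lemma summable_tornheimTerm {a b c : ℕ} (hab : 2 ≤ a + b) (hac : 2 ≤ a + c)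
    (habc : 4 ≤ a + b + c) : Summable (tornheimTerm a b c) := by
  have hsq := summable_one_div_add_one_pow (le_refl 2)
  have hsq_nonneg : 0 ≤ fun n : ℕ => 1 / ((n : ℝ) + 1) ^ 2 := fun n => by positivity
  exact (hsq.mul_of_nonneg hsq hsq_nonneg hsq_nonneg).of_nonneg_of_le
    (tornheimTerm_nonneg a b c) (tornheimTerm_le hab hac habc)

lemma tornheimTerm_succ_succ (a b c : ℕ) (x : ℕ × ℕ) :
    tornheimTerm (a + 1) b (c + 1) x =
      tornheimTerm a (b + 1) (c + 1) x - tornheimTerm (a + 1) (b + 1) c x := by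
  unfold tornheimTerm
  field_simp
  ring

lemma T_succ_succ {a b c : ℕ} (hab : 1 ≤ a + b) (hac : 1 ≤ a + c) (habc : 2 ≤ a + b + c) :
    T (a + 1) b (c + 1) = T a (b + 1) (c + 1) - T (a + 1) (b + 1) c := by
  simp only [T_eq_tsum, tornheimTerm_succ_succ]
  exact (summable_tornheimTerm (by omega) (by omega) (by omega)).tsum_sub
    (summable_tornheimTerm (by omega) (by omega) (by omega))

lemma T_comm (a b c : ℕ) : T a b c = T a c b := by
  rw [T_eq_tsum, T_eq_tsum, ← (Equiv.prodComm ℕ ℕ).tsum_eq]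
  refine tsum_congr fun x => ?_
  simp only [tornheimTerm, Equiv.prodComm_apply, Prod.fst_swap, Prod.snd_swap]
  ring_nf

lemma T_zero_eq_rz_mul_rz {b c : ℕ} (hb : 2 ≤ b) (hc : 2 ≤ c) : T 0 b c = rz b * rz c := by
  have hfb := summable_one_div_add_one_pow hb
  have hfc := summable_one_div_add_one_pow hc
  rw [rz, rz, hfb.tsum_mul_tsum hfc
    (hfb.mul_of_nonneg hfc (fun n => by positivity) (fun n => by positivity))]
  refine tsum_congr fun x => ?_
  rw [pow_zero, one_mul, one_div_mul_one_div]

section Reduction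

variable {k : ℕ} {V : Submodule ℚ ℝ}

lemma neg_one_pow_mul_mem {x : ℝ} (hx : x ∈ V) (n : ℕ) : (-1 : ℝ) ^ n * x ∈ V := by
  rcases neg_one_pow_eq_or ℝ n with h | h <;> simp [h, hx]

lemma T_one_add_neg_one_pow_mul_mem
    (hprod : ∀ j, 2 ≤ j → j ≤ k - 2 → rz j * rz (k - j) ∈ V) :
    ∀ b c, 1 ≤ b → 1 ≤ c → 1 + b + c = k → T 1 b c + (-1) ^ b * T 1 1 (k - 2) ∈ V := by
  intro b
  induction b with
  | zero => intro c hb; omega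
  | succ b ih =>
    intro c _ hc hbc
    rcases Nat.eq_zero_or_pos b with rfl | hb
    · obtain rfl : c = k - 2 := by omega
      simp
    · have hrec := T_succ_succ (a := 0) (b := b) (c := c) (by omega) (by omega) (by omega)
      have hprod' : T 0 (b + 1) (c + 1) ∈ V := by
        rw [T_zero_eq_rz_mul_rz (by omega) (by omega), show c + 1 = k - (b + 1) by omega]
        exact hprod _ (by omega) (by omega)
      convert V.sub_mem hprod' (ih (c + 1) hb (by omega) (by omega)) using 1
      rw [zero_add] at hrec
      rw [hrec, pow_succ]
      ring

lemma T_one_mem (hk : Even k) (hprod : ∀ j, 2 ≤ j → j ≤ k - 2 → rz j * rz (k - j) ∈ V)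
    {b c : ℕ} (hb : 1 ≤ b) (hc : 1 ≤ c) (hbc : 1 + b + c = k) : T 1 b c ∈ V := by
  have hX : T 1 1 (k - 2) ∈ V := by
    have h := T_one_add_neg_one_pow_mul_mem hprod (k - 2) 1 (by omega) le_rfl (by omega)
    rw [T_comm 1 (k - 2) 1, (hk.tsub even_two).neg_one_pow, one_mul, ← two_smul ℚ] at h
    exact (V.smul_mem_iff two_ne_zero).mp h
  simpa using V.sub_mem (T_one_add_neg_one_pow_mul_mem hprod b c hb hc hbc)
    (neg_one_pow_mul_mem hX b)

lemma T_succ_sub_neg_one_pow_mul_dz_mem {a : ℕ} (ha : 1 ≤ a)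
    (hpred : ∀ b c, 1 ≤ b → 1 ≤ c → a + b + c = k → T a b c ∈ V) :
    ∀ c b, 1 ≤ b → a + 1 + b + c = k →
      T (a + 1) b c - (-1) ^ c * dz (a + 1) (k - (a + 1)) ∈ V := by
  intro c
  induction c with
  | zero =>
    intro b _ hbk
    rw [show k - (a + 1) = b by omega, dz_eq_T, T_comm (a + 1) 0 b]
    simp
  | succ c ih =>
    intro b hb hbk
    have hrec := T_succ_succ (a := a) (b := b) (c := c) (by omega) (by omega) (by omega)
    convert V.sub_mem (hpred (b + 1) (c + 1) (by omega) (by omega) (by omega))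
      (ih (b + 1) (by omega) (by omega)) using 1
    rw [hrec, pow_succ]
    ring

lemma T_mem_of_lt {r : ℕ} (hk : Even k)
    (hdz : ∀ j, 2 ≤ j → j ≤ r - 1 → dz j (k - j) ∈ V)
    (hprod : ∀ j, 2 ≤ j → j ≤ k - 2 → rz j * rz (k - j) ∈ V) :
    ∀ a, 1 ≤ a → a < r → ∀ b c, 1 ≤ b → 1 ≤ c → a + b + c = k → T a b c ∈ V := by
  intro a
  induction a with
  | zero => intro ha; omega
  | succ a ih =>
    intro _ har b c hb hc habc
    rcases Nat.eq_zero_or_pos a with rfl | ha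
    · exact T_one_mem hk hprod hb hc habc
    · simpa using V.add_mem
        (T_succ_sub_neg_one_pow_mul_dz_mem ha (ih ha (by omega)) c b hb (by omega))
        (neg_one_pow_mul_mem (hdz (a + 1) (by omega) (by omega)) c)

end Reduction

theorem tornheim_reduction_general (k r q p : ℕ) (hk : Even k) (hr : 2 ≤ r)
    (hq : 1 ≤ q) (hsum : r + q + p = k) :
    T r q p - (-1 : ℝ) ^ p * dz r (k - r) ∈ Submodule.span ℚ
      ({x : ℝ | ∃ j, 2 ≤ j ∧ j ≤ r - 1 ∧ x = dz j (k - j)} ∪ {rz k} ∪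
       {x : ℝ | ∃ j, 2 ≤ j ∧ j ≤ k - 2 ∧ x = rz j * rz (k - j)}) := by
  obtain ⟨a, rfl⟩ : ∃ a, r = a + 1 := ⟨r - 1, by omega⟩
  refine T_succ_sub_neg_one_pow_mul_dz_mem (by omega)
    (T_mem_of_lt (r := a + 1) hk (fun j hj hjr => ?_) (fun j hj hjk => ?_) a (by omega)
      a.lt_succ_self)
    p q hq (by omega)
  · exact Submodule.subset_span (Or.inl (Or.inl ⟨j, hj, hjr, rfl⟩))
  · exact Submodule.subset_span (Or.inr ⟨j, hj, hjk, rfl⟩)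

theorem tornheim_reduction (k r q p : ℕ) (hk : Even k) (hr : 2 ≤ r)
    (hq : 1 ≤ q) (hp : 1 ≤ p) (hsum : r + q + p = k) :
    T r q p - (-1 : ℝ) ^ p * dz r (k - r) ∈ Submodule.span ℚ
      ({x : ℝ | ∃ j, 2 ≤ j ∧ j ≤ r - 1 ∧ x = dz j (k - j)} ∪ {rz k} ∪
       {x : ℝ | ∃ j, 2 ≤ j ∧ j ≤ k - 2 ∧ x = rz j * rz (k - j)}) :=
  tornheim_reduction_general k r q p hk hr hq hsum
end

section
/- For integers p ≥ 2, r ≥ 1, q ≥ 0 with q + r ≥ 2, the Tornheim series satisfies: T(r,q,p) - (-1)^p · Σ_{j=1}^{r-1} C(p+r-j-2, p-1) · ζ(j+1, k-j-1) lies in the Q-span of ζ(k) and the products ζ(j)·ζ(k-j) for 2 ≤ j ≤ k-2, where k = p + q + r. -/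
/-
Since `1 / (n m) = (1 / (n + m)) (1 / n + 1 / m)`, the Tornheim series satisfy
`T(r, q+1, p+1) = T(r+1, q, p+1) + T(r+1, q+1, p)`, with boundary values `T(0, q, p) = ζ(q) ζ(p)`
and `T(r, 0, p) = ζ(r, p)`. Running this recursion down in `r` and `p` modulo the span `V` of
`ζ(k)` and the products `ζ(j) ζ(k-j)`, the coefficients obey Pascal's rule and everything is
reduced to `T(1, k-2, 1)`. Summing `1 / ((n + m) m) = (1 / n) (1 / m - 1 / (n + m))` over `m`
gives `T(1, k-2, 1) = ζ(k) + ζ(k-1, 1)`; the exact recursion for `p = 1` together with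
`T(k-2, 1, 1) = 2 ζ(k-1, 1)` then yields `T(1, k-2, 1) = 2 ζ(k) - Σ_j ζ(j+1, k-j-1)`, which lies
in `V` by the stuffle relation `ζ(a) ζ(b) = ζ(a, b) + ζ(b, a) + ζ(a + b)`.
-/

open Finset Filter Topology

theorem hasSum_sub_add_of_antitone {f : ℕ → ℝ} (hf : Antitone f)
    (hf0 : Tendsto f atTop (𝓝 0)) (n : ℕ) :
    HasSum (fun i => f i - f (i + n)) (∑ j ∈ range n, f j) := by
  have step (j : ℕ) : HasSum (fun i => f (i + j) - f (i + j + 1)) (f j) := by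
    have hnonneg (i : ℕ) : 0 ≤ f (i + j) - f (i + j + 1) := sub_nonneg.2 (hf (by omega))
    rw [hasSum_iff_tendsto_nat_of_nonneg hnonneg]
    have hpartial (N : ℕ) : ∑ i ∈ range N, (f (i + j) - f (i + j + 1)) = f j - f (N + j) := by
      simpa [add_right_comm] using Finset.sum_range_sub' (fun i => f (i + j)) N
    simpa [hpartial] using tendsto_const_nhds.sub ((tendsto_add_atTop_iff_nat j).2 hf0)
  refine (hasSum_sum fun j _ => step j).congr_fun fun i => ?_
  simpa [add_assoc] using (Finset.sum_range_sub' (fun j => f (i + j)) n).symm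

section TriangleDecomposition

variable {α : Type*} [AddCommGroup α] [TopologicalSpace α]

lemma tsum_comp_lower (f : ℕ × ℕ → α) :
    ∑' c : ℕ × ℕ, f (c.1 + c.2 + 1, c.2) =
      ∑' x, {x : ℕ × ℕ | x.2 < x.1}.indicator f x := by
  have hrange : Set.range (fun c : ℕ × ℕ => (c.1 + c.2 + 1, c.2)) = {x | x.2 < x.1} := by
    ext x
    exact ⟨by rintro ⟨c, rfl⟩; show c.2 < c.1 + c.2 + 1; omega,
      fun h => ⟨(x.1 - x.2 - 1, x.2),
        Prod.ext (by change x.2 < x.1 at h; simp only; omega) rfl⟩⟩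
  rw [← hrange, ← _root_.tsum_subtype, tsum_range f]
  intro a b h
  simp only [Prod.mk.injEq] at h
  exact Prod.ext (by omega) (by omega)

lemma tsum_comp_upper (f : ℕ × ℕ → α) :
    ∑' c : ℕ × ℕ, f (c.2, c.1 + c.2 + 1) =
      ∑' x, {x : ℕ × ℕ | x.1 < x.2}.indicator f x := by
  have hrange : Set.range (fun c : ℕ × ℕ => (c.2, c.1 + c.2 + 1)) = {x | x.1 < x.2} := by
    ext x
    exact ⟨by rintro ⟨c, rfl⟩; show c.2 < c.1 + c.2 + 1; omega,
      fun h => ⟨(x.2 - x.1 - 1, x.1),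
        Prod.ext rfl (by change x.1 < x.2 at h; simp only; omega)⟩⟩
  rw [← hrange, ← _root_.tsum_subtype, tsum_range f]
  intro a b h
  simp only [Prod.mk.injEq] at h
  exact Prod.ext (by omega) (by omega)

lemma tsum_comp_diag (f : ℕ × ℕ → α) :
    ∑' n : ℕ, f (n, n) = ∑' x, {x : ℕ × ℕ | x.1 = x.2}.indicator f x := by
  have hrange : Set.range (fun n : ℕ => (n, n)) = {x | x.1 = x.2} := by
    ext x
    exact ⟨by rintro ⟨n, rfl⟩; rfl, fun h => ⟨x.1, Prod.ext rfl h⟩⟩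
  rw [← hrange, ← _root_.tsum_subtype, tsum_range f]
  intro a b h
  exact (Prod.mk.injEq _ _ _ _ ▸ h).1

end TriangleDecomposition

theorem tsum_eq_lower_add_upper_add_diag {α : Type*} [AddCommGroup α] [UniformSpace α]
    [IsUniformAddGroup α] [CompleteSpace α] [T2Space α] {f : ℕ × ℕ → α}
    (hf : Summable f) :
    ∑' x, f x = ∑' c : ℕ × ℕ, f (c.1 + c.2 + 1, c.2)
      + ∑' c : ℕ × ℕ, f (c.2, c.1 + c.2 + 1) + ∑' n : ℕ, f (n, n) := by
  have hsplit (x : ℕ × ℕ) : f x = {x : ℕ × ℕ | x.2 < x.1}.indicator f x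
      + {x : ℕ × ℕ | x.1 < x.2}.indicator f x
      + {x : ℕ × ℕ | x.1 = x.2}.indicator f x := by
    simp only [Set.indicator_apply, Set.mem_ofPred_eq]
    split_ifs <;> first | omega | simp
  rw [tsum_congr hsplit, ((hf.indicator _).add (hf.indicator _)).tsum_add (hf.indicator _),
    (hf.indicator _).tsum_add (hf.indicator _), tsum_comp_lower, tsum_comp_upper, tsum_comp_diag]

namespace Tornheim

noncomputable def term (r q p : ℕ) (x : ℕ × ℕ) : ℝ :=
  1 / (((x.1 : ℝ) + (x.2 : ℝ) + 2) ^ r * ((x.1 : ℝ) + 1) ^ q * ((x.2 : ℝ) + 1) ^ p)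

lemma T_eq_tsum_term (r q p : ℕ) : T r q p = ∑' x, term r q p x := rfl

lemma term_nonneg (r q p : ℕ) (x : ℕ × ℕ) : 0 ≤ term r q p x := by
  unfold term; positivity

lemma term_swap (r q p : ℕ) (x : ℕ × ℕ) : term r q p x.swap = term r p q x := by
  simp only [term, Prod.fst_swap, Prod.snd_swap]
  ring_nf

lemma T_comm (r q p : ℕ) : T r q p = T r p q := by
  rw [T_eq_tsum_term, ← (Equiv.prodComm ℕ ℕ).tsum_eq]
  exact tsum_congr fun x => term_swap r q p x

lemma T_zero_mid (r p : ℕ) : T r 0 p = dz r p := by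
  simp only [T, dz, pow_zero, mul_one]

lemma T_zero_right (r q : ℕ) : T r q 0 = dz r q := by
  rw [T_comm, T_zero_mid]

lemma summable_one_div_succ_pow {j : ℕ} (hj : 2 ≤ j) :
    Summable fun n : ℕ => 1 / ((n : ℝ) + 1) ^ j := by
  refine ((summable_nat_add_iff 1).2 (Real.summable_one_div_nat_pow.2 hj)).congr fun n => ?_
  push_cast; rfl

lemma summable_term {r q p : ℕ} (hrq : 2 ≤ r + q) (hrp : 2 ≤ r + p) (hk : 4 ≤ r + q + p) :
    Summable (term r q p) := by
  -- split `(n + m)^r` between the two factors so that each gets an exponent at least 2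
  obtain ⟨a, b, hab, ha, hb⟩ : ∃ a b : ℕ, a + b = r ∧ 2 ≤ a + q ∧ 2 ≤ b + p :=
    if h : 2 ≤ p then ⟨r, 0, by omega, by omega, by omega⟩
    else ⟨r - (2 - p), 2 - p, by omega, by omega, by omega⟩
  refine ((summable_one_div_succ_pow ha).mul_of_nonneg (summable_one_div_succ_pow hb)
    (fun _ => by positivity) (fun _ => by positivity)).of_nonneg_of_le (term_nonneg r q p)
    fun x => ?_
  have hx1 : (x.1 : ℝ) + 1 ≤ x.1 + x.2 + 2 := by linarith [x.2.cast_nonneg (α := ℝ)]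
  have hx2 : (x.2 : ℝ) + 1 ≤ x.1 + x.2 + 2 := by linarith [x.1.cast_nonneg (α := ℝ)]
  rw [term, one_div_mul_one_div, ← hab]
  apply one_div_le_one_div_of_le (by positivity)
  calc ((x.1 : ℝ) + 1) ^ (a + q) * ((x.2 : ℝ) + 1) ^ (b + p)
      = ((x.1 : ℝ) + 1) ^ a * ((x.2 : ℝ) + 1) ^ b *
          (((x.1 : ℝ) + 1) ^ q * ((x.2 : ℝ) + 1) ^ p) := by ring
    _ ≤ ((x.1 : ℝ) + x.2 + 2) ^ a * ((x.1 : ℝ) + x.2 + 2) ^ b *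
          (((x.1 : ℝ) + 1) ^ q * ((x.2 : ℝ) + 1) ^ p) := by gcongr
    _ = ((x.1 : ℝ) + x.2 + 2) ^ (a + b) * ((x.1 : ℝ) + 1) ^ q * ((x.2 : ℝ) + 1) ^ p := by ring

lemma T_zero_left {q p : ℕ} (hq : 2 ≤ q) (hp : 2 ≤ p) : T 0 q p = rz q * rz p := by
  have hq' := summable_one_div_succ_pow hq
  have hp' := summable_one_div_succ_pow hp
  rw [rz, rz, hq'.tsum_mul_tsum hp'
    (hq'.mul_of_nonneg hp' (fun _ => by positivity) (fun _ => by positivity))]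
  simp only [T, pow_zero, one_mul, one_div_mul_one_div]

lemma term_partial_fraction (r q p : ℕ) (x : ℕ × ℕ) :
    term r (q + 1) (p + 1) x = term (r + 1) q (p + 1) x + term (r + 1) (q + 1) p x := by
  have h1 : (0 : ℝ) < (x.1 : ℝ) + 1 := by positivity
  have h2 : (0 : ℝ) < (x.2 : ℝ) + 1 := by positivity
  simp only [term]
  field_simp
  ring

lemma T_partial_fraction {r q p : ℕ} (hrq : 1 ≤ r + q) (hrp : 1 ≤ r + p)
    (hk : 2 ≤ r + q + p) :
    T r (q + 1) (p + 1) = T (r + 1) q (p + 1) + T (r + 1) (q + 1) p := by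
  simp only [T_eq_tsum_term, term_partial_fraction r q p]
  exact (summable_term (by omega) (by omega) (by omega)).tsum_add
    (summable_term (by omega) (by omega) (by omega))

lemma dz_eq_tsum_lower (a b : ℕ) :
    dz a b = ∑' c : ℕ × ℕ, term 0 a b (c.1 + c.2 + 1, c.2) := by
  refine tsum_congr fun c => ?_
  simp only [term, pow_zero, one_mul]
  push_cast
  ring_nf

lemma dz_eq_tsum_upper (a b : ℕ) :
    dz b a = ∑' c : ℕ × ℕ, term 0 a b (c.2, c.1 + c.2 + 1) := by
  refine tsum_congr fun c => ?_
  simp only [term, pow_zero, one_mul]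
  push_cast
  ring_nf

lemma rz_add_eq_tsum_diag (a b : ℕ) : rz (a + b) = ∑' n : ℕ, term 0 a b (n, n) := by
  refine tsum_congr fun n => ?_
  simp only [term, pow_zero, one_mul, pow_add]

theorem rz_mul_rz {a b : ℕ} (ha : 2 ≤ a) (hb : 2 ≤ b) :
    rz a * rz b = dz a b + dz b a + rz (a + b) := by
  rw [← T_zero_left ha hb, T_eq_tsum_term,
    tsum_eq_lower_add_upper_add_diag (summable_term (by omega) (by omega) (by omega)),
    dz_eq_tsum_lower, dz_eq_tsum_upper, rz_add_eq_tsum_diag]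

lemma antitone_one_div_succ : Antitone fun n : ℕ => 1 / ((n : ℝ) + 1) :=
  fun _ _ h => one_div_le_one_div_of_le (by positivity) (by gcongr)

lemma hasSum_term_one_one_row (s b : ℕ) :
    HasSum (fun c => term 1 s 1 (b, c))
      (1 / ((b : ℝ) + 1) ^ (s + 1) * ∑ j ∈ range (b + 1), 1 / ((j : ℝ) + 1)) := by
  -- `1 / ((n + m) m) = (1 / n) (1 / m - 1 / (n + m))` makes the row a telescoping series
  refine ((hasSum_sub_add_of_antitone antitone_one_div_succ tendsto_one_div_add_atTop_nhds_zero_nat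
    (b + 1)).mul_left _).congr_fun fun c => ?_
  simp only [term]
  push_cast
  field_simp
  ring

lemma hasSum_dz_succ_one {s : ℕ} (hs : 2 ≤ s) :
    HasSum (fun b : ℕ => 1 / ((b : ℝ) + 1) ^ (s + 1) * ∑ j ∈ range b, 1 / ((j : ℝ) + 1))
      (dz (s + 1) 1) := by
  set F := {x : ℕ × ℕ | x.2 < x.1}.indicator (term 0 (s + 1) 1)
  have hF : Summable F := by
    refine (summable_term (r := 0) (q := s) (p := 2) (by omega) (by omega) (by omega))
      |>.of_nonneg_of_le
      (fun x => Set.indicator_nonneg (fun x _ => term_nonneg _ _ _ x) x)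
      fun x => Set.indicator_apply_le' (fun hx => ?_) fun _ => term_nonneg _ _ _ x
    have hx : (x.2 : ℝ) + 1 ≤ x.1 + 1 := by
      have : (x.2 : ℝ) ≤ x.1 := by exact_mod_cast (show x.2 < x.1 from hx).le
      linarith
    simp only [term, pow_zero, one_mul]
    apply one_div_le_one_div_of_le (by positivity)
    calc ((x.1 : ℝ) + 1) ^ s * ((x.2 : ℝ) + 1) ^ 2
        = ((x.1 : ℝ) + 1) ^ s * ((x.2 : ℝ) + 1) * ((x.2 : ℝ) + 1) := by ring
      _ ≤ ((x.1 : ℝ) + 1) ^ s * ((x.2 : ℝ) + 1) * ((x.1 : ℝ) + 1) := by gcongr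
      _ = ((x.1 : ℝ) + 1) ^ (s + 1) * ((x.2 : ℝ) + 1) ^ 1 := by ring
  rw [dz_eq_tsum_lower, tsum_comp_lower]
  refine hF.hasSum.prod_fiberwise fun b => ?_
  have hrow : HasSum (fun c => F (b, c)) (∑ c ∈ range b, F (b, c)) :=
    hasSum_sum_of_ne_finset_zero fun c hc => Set.indicator_of_notMem (by simpa using hc) _
  convert hrow using 1
  rw [mul_sum]
  refine sum_congr rfl fun c hc => ?_
  rw [show F (b, c) = term 0 (s + 1) 1 (b, c) from
    Set.indicator_of_mem (s := {x : ℕ × ℕ | x.2 < x.1}) (a := (b, c)) (mem_range.1 hc) _]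
  simp only [term, pow_zero, one_mul, pow_one, one_div_mul_one_div]

theorem T_one_left_one_right {s : ℕ} (hs : 2 ≤ s) : T 1 s 1 = rz (s + 2) + dz (s + 1) 1 := by
  have hdz := hasSum_dz_succ_one hs
  have hrows : HasSum (fun b : ℕ => 1 / ((b : ℝ) + 1) ^ (s + 2)
      + 1 / ((b : ℝ) + 1) ^ (s + 1) * ∑ j ∈ range b, 1 / ((j : ℝ) + 1)) (T 1 s 1) := by
    refine (summable_term (by omega) (by omega) (by omega)).hasSum.prod_fiberwise fun b => ?_
    convert hasSum_term_one_one_row s b using 1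
    rw [sum_range_succ]
    field_simp
    ring
  exact hrows.unique (((summable_one_div_succ_pow (by omega)).hasSum).add hdz)

noncomputable def dzSum (k r p : ℕ) : ℝ :=
  ∑ j ∈ Icc 1 (r - 1), ((p + r - j - 2).choose (p - 1) : ℝ) * dz (j + 1) (k - j - 1)

lemma dzSum_one_left (k p : ℕ) : dzSum k 1 p = 0 := by
  simp [dzSum]

lemma dzSum_one_right (k r : ℕ) :
    dzSum k r 1 = ∑ j ∈ Icc 1 (r - 1), dz (j + 1) (k - j - 1) := by
  simp [dzSum]

lemma dzSum_succ_one (k r : ℕ) :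
    dzSum k (r + 2) 1 = dzSum k (r + 1) 1 + dz (r + 2) (k - r - 2) := by
  rw [dzSum_one_right, dzSum_one_right, show r + 2 - 1 = r + 1 by omega, Nat.add_sub_cancel,
    sum_Icc_succ_top (by omega), show k - (r + 1) - 1 = k - r - 2 by omega]

lemma dzSum_pascal (k : ℕ) {r p : ℕ} (hr : 1 ≤ r) (hp : 1 ≤ p) :
    dzSum k (r + 1) (p + 1) = dzSum k r (p + 1) + dzSum k (r + 1) p := by
  obtain ⟨r, rfl⟩ : ∃ r', r = r' + 1 := ⟨r - 1, by omega⟩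
  obtain ⟨p, rfl⟩ : ∃ p', p = p' + 1 := ⟨p - 1, by omega⟩
  simp only [dzSum, Nat.add_sub_cancel]
  rw [sum_Icc_succ_top (by omega), sum_Icc_succ_top (by omega),
    show p + 1 + 1 + (r + 1 + 1) - (r + 1) - 2 = p + 1 by omega,
    show p + 1 + (r + 1 + 1) - (r + 1) - 2 = p by omega, Nat.choose_self, Nat.choose_self]
  have hchoose : ∀ j ∈ Icc 1 r, ((p + 1 + 1 + (r + 1 + 1) - j - 2).choose (p + 1) : ℝ) =
      (p + 1 + 1 + (r + 1) - j - 2).choose (p + 1) + (p + 1 + (r + 1 + 1) - j - 2).choose p := by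
    intro j hj
    have hj := (mem_Icc.1 hj).2
    rw [show p + 1 + 1 + (r + 1 + 1) - j - 2 = (p + r + 1 - j) + 1 by omega,
      Nat.choose_succ_succ', show p + 1 + 1 + (r + 1) - j - 2 = p + r + 1 - j by omega,
      show p + 1 + (r + 1 + 1) - j - 2 = p + r + 1 - j by omega]
    push_cast
    ring
  rw [sum_congr rfl fun j hj => by rw [hchoose j hj, add_mul], sum_add_distrib]
  ring

theorem T_right_one_eq_sub_dzSum {k : ℕ} (hk : 4 ≤ k) :
    ∀ r q : ℕ, q + r + 2 = k → T (r + 1) q 1 = T 1 (k - 2) 1 - dzSum k (r + 1) 1 := by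
  intro r
  induction r with
  | zero =>
    intro q hq
    rw [dzSum_one_left, show k - 2 = q by omega, sub_zero]
  | succ r ih =>
    intro q hq
    have hpf := T_partial_fraction (r := r + 1) (q := q) (p := 0) (by omega) (by omega) (by omega)
    rw [T_zero_right] at hpf
    rw [dzSum_succ_one, show k - r - 2 = q + 1 by omega]
    linear_combination ih (q + 1) (by omega) - hpf

noncomputable def zetaSpan (k : ℕ) : Submodule ℚ ℝ :=
  Submodule.span ℚ
    ({rz k} ∪ {x : ℝ | ∃ j, 2 ≤ j ∧ j ≤ k - 2 ∧ x = rz j * rz (k - j)})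

lemma rz_mem_zetaSpan (k : ℕ) : rz k ∈ zetaSpan k :=
  Submodule.subset_span (Or.inl rfl)

lemma rz_mul_rz_mem_zetaSpan {a b k : ℕ} (ha : 2 ≤ a) (hb : 2 ≤ b) (hab : a + b = k) :
    rz a * rz b ∈ zetaSpan k :=
  Submodule.subset_span (Or.inr ⟨a, ha, by omega, by rw [← hab, Nat.add_sub_cancel_left]⟩)

lemma dzSum_one_mem_zetaSpan {k : ℕ} (hk : 4 ≤ k) : dzSum k (k - 2) 1 ∈ zetaSpan k := by
  rw [dzSum_one_right, show k - 2 - 1 = k - 3 by omega]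
  have hreflect : ∑ j ∈ Icc 1 (k - 3), dz (k - j - 1) (j + 1)
      = ∑ j ∈ Icc 1 (k - 3), dz (j + 1) (k - j - 1) := by
    refine sum_nbij' (fun j => k - 2 - j) (fun j => k - 2 - j) ?_ ?_ ?_ ?_ ?_
    all_goals intro j hj; simp only [mem_Icc] at hj
    · exact mem_Icc.2 ⟨by omega, by omega⟩
    · exact mem_Icc.2 ⟨by omega, by omega⟩
    · omega
    · omega
    · rw [show k - (k - 2 - j) - 1 = j + 1 by omega, show k - 2 - j + 1 = k - j - 1 by omega]
  have htwice : (2 : ℚ) • ∑ j ∈ Icc 1 (k - 3), dz (j + 1) (k - j - 1)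
      = ∑ j ∈ Icc 1 (k - 3), (rz (j + 1) * rz (k - j - 1) - rz k) := by
    rw [Rat.smul_def, Rat.cast_ofNat, two_mul]
    nth_rewrite 1 [← hreflect]
    rw [← sum_add_distrib]
    refine sum_congr rfl fun j hj => ?_
    have hj := mem_Icc.1 hj
    rw [rz_mul_rz (by omega) (by omega), show j + 1 + (k - j - 1) = k by omega]
    ring
  rw [← Submodule.smul_mem_iff _ (two_ne_zero (α := ℚ)), htwice]
  refine Submodule.sum_mem _ fun j hj => Submodule.sub_mem _ ?_ (rz_mem_zetaSpan k)
  have hj := mem_Icc.1 hj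
  exact rz_mul_rz_mem_zetaSpan (by omega) (by omega) (by omega)

theorem T_one_mem_zetaSpan {k : ℕ} (hk : 4 ≤ k) : T 1 (k - 2) 1 ∈ zetaSpan k := by
  have hT11 : T 1 (k - 2) 1 = rz k + dz (k - 1) 1 := by
    rw [T_one_left_one_right (by omega), show k - 2 + 2 = k by omega,
      show k - 2 + 1 = k - 1 by omega]
  have hpf := T_partial_fraction (r := k - 2) (q := 0) (p := 0) (by omega) (by omega) (by omega)
  rw [T_zero_mid, T_zero_right, show k - 2 + 1 = k - 1 by omega] at hpf
  have hA := T_right_one_eq_sub_dzSum hk (k - 3) 1 (by omega)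
  rw [show k - 3 + 1 = k - 2 by omega] at hA
  have hval : T 1 (k - 2) 1 = (2 : ℚ) • rz k - dzSum k (k - 2) 1 := by
    rw [Rat.smul_def, Rat.cast_ofNat]
    linear_combination 2 * hT11 - hpf + hA
  rw [hval]
  exact Submodule.sub_mem _ (Submodule.smul_mem _ _ (rz_mem_zetaSpan k))
    (dzSum_one_mem_zetaSpan hk)

theorem T_sModEq_dzSum {k : ℕ} (hk : 4 ≤ k) {p : ℕ} (hp : 1 ≤ p) :
    ∀ {r q : ℕ}, 1 ≤ r → 2 ≤ q + r → p + q + r = k →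
      T r q p ≡ (-1) ^ p * dzSum k r p [SMOD zetaSpan k] := by
  induction p, hp using Nat.le_induction with
  | base =>
    intro r q hr _ hsum
    obtain ⟨r, rfl⟩ : ∃ r', r = r' + 1 := ⟨r - 1, by omega⟩
    rw [T_right_one_eq_sub_dzSum hk r q (by omega)]
    convert (SModEq.zero.2 (T_one_mem_zetaSpan hk)).sub (SModEq.refl (dzSum k (r + 1) 1)) using 1
    ring
  | succ p hp ih =>
    intro r q hr
    induction r, hr using Nat.le_induction generalizing q with
    | base =>
      intro hqr hsum
      have hpf := T_partial_fraction (r := 0) (q := q) (p := p) (by omega) (by omega) (by omega)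
      rw [T_zero_left (by omega) (by omega)] at hpf
      have hprod := SModEq.zero.2 (rz_mul_rz_mem_zetaSpan (k := k) (a := q + 1) (b := p + 1)
        (by omega) (by omega) (by omega))
      have h1 := ih (r := 1) (q := q + 1) le_rfl (by omega) (by omega)
      rw [dzSum_one_left, mul_zero] at h1 ⊢
      rw [show T 1 q (p + 1) = rz (q + 1) * rz (p + 1) - T 1 (q + 1) p by linarith]
      simpa using hprod.sub h1
    | succ r hr ihr =>
      intro hqr hsum
      have hpf := T_partial_fraction (r := r) (q := q) (p := p) (by omega) (by omega) (by omega)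
      rw [show T (r + 1) q (p + 1) = T r (q + 1) (p + 1) - T (r + 1) (q + 1) p by linarith,
        dzSum_pascal k hr hp]
      convert (ihr (q := q + 1) (by omega) (by omega)).sub
        (ih (r := r + 1) (q := q + 1) (by omega) (by omega) (by omega)) using 1
      ring

end Tornheim

theorem tornheim_boyadzhiev (p r q k : ℕ) (hp : 2 ≤ p) (hr : 1 ≤ r)
    (hqr : 2 ≤ q + r) (hk : k = p + q + r) :
    T r q p - (-1 : ℝ) ^ p *
        ∑ j ∈ Finset.Icc 1 (r - 1),
          ((p + r - j - 2).choose (p - 1) : ℝ) * dz (j + 1) (k - j - 1)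
      ∈ Submodule.span ℚ
        ({rz k} ∪ {x : ℝ | ∃ j, 2 ≤ j ∧ j ≤ k - 2 ∧ x = rz j * rz (k - j)}) :=
  SModEq.sub_mem.mp (Tornheim.T_sModEq_dzSum (by omega) (by omega) hr hqr hk.symm)
end
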